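/- Soundness of the joint fixpoint rule FP2: For every hybrid game α and all sets of states X, Y, R ⊆ S, if (X ∩ Y) ∪ (ς_α(R, R) ∩ δ_α(R, R)) ⊆ R, then ς_{α*}(X, Y) ∩ δ_{α*}(X, Y) ⊆ R. -/
import Mathlib


open Set

/-- Hybrid games over a variable set `V`. Terms/ODE right-hand sides are
interpreted as functions from states `V → ℝ` to `ℝ`; tests and evolution
domain constraints are sets of states. -/
inductive Game (V : Type*) where
  | assign (x : V) (e : (V → ℝ) → ℝ)
  | ode (x : V) (f : (V → ℝ) → ℝ) (Q : Set (V → ℝ))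
  | test (Q : Set (V → ℝ))
  | choice (a b : Game V)
  | seq (a b : Game V)
  | dual (a : Game V)
  | star (a : Game V)

variable {V : Type*} [DecidableEq V]

/-- `φ : ℝ → (V → ℝ)` (restricted to `[0,r]`) is a solution of `x' = f(x) & Q`
of duration `r ≥ 0`: `t ↦ φ t x` is differentiable with derivative `f (φ s)`
at each `s ∈ [0,r]`, `φ s ∈ Q` on `[0,r]`, and all other variables stay
constant along `φ`. -/
def IsSolution (x : V) (f : (V → ℝ) → ℝ) (Q : Set (V → ℝ)) (r : ℝ)
    (φ : ℝ → (V → ℝ)) : Prop :=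
  0 ≤ r ∧
  (∀ s ∈ Set.Icc 0 r, HasDerivAt (fun t => φ t x) (f (φ s)) s) ∧
  (∀ s ∈ Set.Icc 0 r, φ s ∈ Q) ∧
  (∀ s ∈ Set.Icc 0 r, ∀ y, y ≠ x → φ s y = φ 0 y)

mutual
/-- Angel's semi-competitive winning region ς_α(X,Y). -/
def angel : Game V → Set (V → ℝ) → Set (V → ℝ) → Set (V → ℝ)
  | .assign x e, X, _ => {ω | Function.update ω x (e ω) ∈ X}
  | .ode x f Q, X, _ =>
      {ω | ∃ r φ, IsSolution x f Q r φ ∧ φ 0 = ω ∧ φ r ∈ X}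
  | .test Q, X, _ => Q ∩ X
  | .choice a b, X, Y => angel a X Y ∪ angel b X Y
  | .seq a b, X, Y => angel a (angel b X Y) (demon b X Y)
  | .dual a, X, Y => demon a Y X
  | .star a, X, Y =>
      ⋂₀ {Z | X ∪ angel a Z Zᶜ ⊆ Z} ∪
      ⋂₀ {Z | (X ∩ Y) ∪ (angel a Z Z ∩ demon a Z Z) ⊆ Z}

/-- Demon's semi-competitive winning region δ_α(X,Y). -/
def demon : Game V → Set (V → ℝ) → Set (V → ℝ) → Set (V → ℝ)
  | .assign x e, _, Y => {ω | Function.update ω x (e ω) ∈ Y}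
  | .ode x f Q, X, Y =>
      {ω | ∀ r φ, IsSolution x f Q r φ → φ 0 = ω → ∀ s ∈ Set.Icc 0 r, φ s ∈ Y} ∪
      {ω | ∃ r φ, IsSolution x f Q r φ ∧ φ 0 = ω ∧ ∃ s ∈ Set.Icc 0 r, φ s ∈ X ∩ Y}
  | .test Q, _, Y => Qᶜ ∪ Y
  | .choice a b, X, Y =>
      (demon a X Y ∩ demon b X Y) ∪ (demon a X Y ∩ angel a X Y) ∪
      (demon b X Y ∩ angel b X Y)
  | .seq a b, X, Y => demon a (angel b X Y) (demon b X Y)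
  | .dual a, X, Y => angel a Y X
  | .star a, X, Y =>
      ⋃₀ {Z | Z ⊆ Y ∩ demon a Zᶜ Z} ∪
      ⋂₀ {Z | (X ∩ Y) ∪ (angel a Z Z ∩ demon a Z Z) ⊆ Z}
end

/-- Angel's one-argument zero-sum dGL winning region ς_α(X). -/
def dglAngel : Game V → Set (V → ℝ) → Set (V → ℝ)
  | .assign x e, X => {ω | Function.update ω x (e ω) ∈ X}
  | .ode x f Q, X => {ω | ∃ r φ, IsSolution x f Q r φ ∧ φ 0 = ω ∧ φ r ∈ X}
  | .test Q, X => Q ∩ X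
  | .choice a b, X => dglAngel a X ∪ dglAngel b X
  | .seq a b, X => dglAngel a (dglAngel b X)
  | .dual a, X => (dglAngel a Xᶜ)ᶜ
  | .star a, X => ⋂₀ {Z | X ∪ dglAngel a Z ⊆ Z}

/-- Demon's one-argument zero-sum dGL winning region δ_α(X) = (ς_α(Xᶜ))ᶜ. -/
def dglDemon (g : Game V) (X : Set (V → ℝ)) : Set (V → ℝ) :=
  (dglAngel g Xᶜ)ᶜ

/-- Systematization α^{-d}: removes all dual operators. -/
def Game.sys : Game V → Game V
  | .assign x e => .assign x e
  | .ode x f Q => .ode x f Q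
  | .test Q => .test Q
  | .choice a b => .choice a.sys b.sys
  | .seq a b => .seq a.sys b.sys
  | .dual a => a.sys
  | .star a => .star a.sys

theorem gmono (g : Game V) : ∀ (X X' Y Y' : Set (V → ℝ)), X ⊆ X' → Y ⊆ Y' →
    angel g X Y ⊆ angel g X' Y' ∧ demon g X Y ⊆ demon g X' Y' := by
  induction g with
  | assign x e =>
    intro X X' Y Y' hX hY
    exact ⟨fun ω hω => hX hω, fun ω hω => hY hω⟩
  | ode x f Q =>
    intro X X' Y Y' hX hY
    constructor
    · rintro ω ⟨r, φ, hs, h0, hr⟩; exact ⟨r, φ, hs, h0, hX hr⟩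
    · rintro ω (hω | ⟨r, φ, hs, h0, s, hsIcc, hsX, hsY⟩)
      · exact Or.inl fun r φ hs h0 s hsI => hY (hω r φ hs h0 s hsI)
      · exact Or.inr ⟨r, φ, hs, h0, s, hsIcc, hX hsX, hY hsY⟩
  | test Q =>
    intro X X' Y Y' hX hY
    exact ⟨fun ω ⟨h1, h2⟩ => ⟨h1, hX h2⟩,
      fun ω hω => hω.imp id (fun h => hY h)⟩
  | choice a b iha ihb =>
    intro X X' Y Y' hX hY
    obtain ⟨ha1, ha2⟩ := iha X X' Y Y' hX hY
    obtain ⟨hb1, hb2⟩ := ihb X X' Y Y' hX hY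
    constructor
    · exact Set.union_subset_union ha1 hb1
    · rintro ω ((⟨h1, h2⟩ | ⟨h1, h2⟩) | ⟨h1, h2⟩)
      · exact Or.inl (Or.inl ⟨ha2 h1, hb2 h2⟩)
      · exact Or.inl (Or.inr ⟨ha2 h1, ha1 h2⟩)
      · exact Or.inr ⟨hb2 h1, hb1 h2⟩
  | seq a b iha ihb =>
    intro X X' Y Y' hX hY
    obtain ⟨hb1, hb2⟩ := ihb X X' Y Y' hX hY
    exact iha _ _ _ _ hb1 hb2
  | dual a iha =>
    intro X X' Y Y' hX hY
    exact ⟨(iha Y Y' X X' hY hX).2, (iha Y Y' X X' hY hX).1⟩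
  | star a iha =>
    intro X X' Y Y' hX hY
    constructor
    · apply Set.union_subset_union
      · exact Set.sInter_subset_sInter fun Z hZ =>
          Set.union_subset (hX.trans ((Set.subset_union_left).trans hZ))
            ((Set.subset_union_right).trans hZ)
      · exact Set.sInter_subset_sInter fun Z hZ =>
          Set.union_subset ((Set.inter_subset_inter hX hY).trans
            ((Set.union_subset_iff.mp hZ).1)) (Set.union_subset_iff.mp hZ).2
    · apply Set.union_subset_union
      · exact Set.sUnion_subset_sUnion fun Z hZ =>
          hZ.trans (Set.inter_subset_inter hY (le_refl _))
      · exact Set.sInter_subset_sInter fun Z hZ =>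
          Set.union_subset ((Set.inter_subset_inter hX hY).trans
            ((Set.union_subset_iff.mp hZ).1)) (Set.union_subset_iff.mp hZ).2

theorem joint (g : Game V) : ∀ (X Y : Set (V → ℝ)),
    angel g X Y ∩ demon g X Y ⊆
      angel g (X ∩ Y) (X ∩ Y) ∩ demon g (X ∩ Y) (X ∩ Y) := by
  induction g with
  | assign x e =>
    intro X Y ω ⟨h1, h2⟩; exact ⟨⟨h1, h2⟩, ⟨h1, h2⟩⟩
  | ode x f Q =>
    rintro X Y ω ⟨⟨r, φ, hs, h0, hr⟩, (hd | ⟨r', φ', hs', h0', s, hsI, hX, hY⟩)⟩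
    · have hrI : r ∈ Set.Icc 0 r := ⟨hs.1, le_refl r⟩
      have : φ r ∈ X ∩ Y := ⟨hr, hd r φ hs h0 r hrI⟩
      exact ⟨⟨r, φ, hs, h0, this⟩, Or.inr ⟨r, φ, hs, h0, r, hrI, this, this⟩⟩
    · have htr : IsSolution x f Q s φ' := by
        obtain ⟨h1, h2, h3, h4⟩ := hs'
        have hsub : Set.Icc (0:ℝ) s ⊆ Set.Icc 0 r' := Set.Icc_subset_Icc le_rfl hsI.2
        exact ⟨hsI.1, fun t ht => h2 t (hsub ht), fun t ht => h3 t (hsub ht),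
          fun t ht => h4 t (hsub ht)⟩
      exact ⟨⟨s, φ', htr, h0', ⟨hX, hY⟩⟩,
        Or.inr ⟨r', φ', hs', h0', s, hsI, ⟨hX, hY⟩, ⟨hX, hY⟩⟩⟩
  | test Q =>
    rintro X Y ω ⟨⟨hQ, hX⟩, (hQ' | hY)⟩
    · exact absurd hQ hQ'
    · exact ⟨⟨hQ, hX, hY⟩, Or.inr ⟨hX, hY⟩⟩
  | choice a b iha ihb =>
    rintro X Y ω ⟨(ha | hb), ((⟨hda, hdb⟩ | ⟨hda, haa⟩) | ⟨hdb, hab⟩)⟩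
    · obtain ⟨h1, h2⟩ := iha X Y ⟨ha, hda⟩
      exact ⟨Or.inl h1, Or.inl (Or.inr ⟨h2, h1⟩)⟩
    · obtain ⟨h1, h2⟩ := iha X Y ⟨haa, hda⟩
      exact ⟨Or.inl h1, Or.inl (Or.inr ⟨h2, h1⟩)⟩
    · obtain ⟨h1, h2⟩ := ihb X Y ⟨hab, hdb⟩
      exact ⟨Or.inr h1, Or.inr ⟨h2, h1⟩⟩
    · obtain ⟨h1, h2⟩ := ihb X Y ⟨hb, hdb⟩
      exact ⟨Or.inr h1, Or.inr ⟨h2, h1⟩⟩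
    · obtain ⟨h1, h2⟩ := iha X Y ⟨haa, hda⟩
      exact ⟨Or.inl h1, Or.inl (Or.inr ⟨h2, h1⟩)⟩
    · obtain ⟨h1, h2⟩ := ihb X Y ⟨hab, hdb⟩
      exact ⟨Or.inr h1, Or.inr ⟨h2, h1⟩⟩
  | seq a b iha ihb =>
    intro X Y ω hω
    have step := iha (angel b X Y) (demon b X Y) hω
    have hsub : angel b X Y ∩ demon b X Y ⊆ angel b (X ∩ Y) (X ∩ Y) := fun ω' h =>
      (ihb X Y h).1
    have hsub' : angel b X Y ∩ demon b X Y ⊆ demon b (X ∩ Y) (X ∩ Y) := fun ω' h =>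
      (ihb X Y h).2
    exact ⟨(gmono a _ _ _ _ hsub hsub').1 step.1, (gmono a _ _ _ _ hsub hsub').2 step.2⟩
  | dual a iha =>
    intro X Y ω ⟨h1, h2⟩
    have := iha Y X ⟨h2, h1⟩
    rw [Set.inter_comm Y X] at this
    exact ⟨this.2, this.1⟩
  | star a iha =>
    intro X Y ω ⟨hA, hB⟩
    have hC : ω ∈ ⋂₀ {Z | (X ∩ Y) ∪ (angel a Z Z ∩ demon a Z Z) ⊆ Z} := by
      rcases hA with hA | hC
      · rcases hB with ⟨Z₀, hZ₀, hωZ₀⟩ | hC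
        · -- key argument
          intro T hT
          have hW : X ∪ angel a (T ∪ Z₀ᶜ) (T ∪ Z₀ᶜ)ᶜ ⊆ T ∪ Z₀ᶜ := by
            apply Set.union_subset
            · intro ω' hω'
              by_cases hz : ω' ∈ Z₀
              · exact Or.inl (hT (Or.inl ⟨hω', (hZ₀ hz).1⟩))
              · exact Or.inr hz
            · intro ω' hω'
              by_cases hz : ω' ∈ Z₀
              · have hd : ω' ∈ demon a Z₀ᶜ Z₀ := (hZ₀ hz).2
                have h1 : ω' ∈ angel a (T ∪ Z₀ᶜ) Z₀ :=
                  (gmono a _ _ _ _ (le_refl _)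
                    (fun t ht => not_not.mp fun hz => ht (Or.inr hz) : (T ∪ Z₀ᶜ)ᶜ ⊆ Z₀)).1 hω'
                have h2 : ω' ∈ demon a (T ∪ Z₀ᶜ) Z₀ :=
                  (gmono a _ _ _ _ (Set.subset_union_right) (le_refl _)).2 hd
                have hj := iha (T ∪ Z₀ᶜ) Z₀ ⟨h1, h2⟩
                have hsub : (T ∪ Z₀ᶜ) ∩ Z₀ ⊆ T := by
                  rintro t ⟨(ht | ht), hz'⟩
                  · exact ht
                  · exact absurd hz' ht
                have h3 : ω' ∈ angel a T T := (gmono a _ _ _ _ hsub hsub).1 hj.1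
                have h4 : ω' ∈ demon a T T := (gmono a _ _ _ _ hsub hsub).2 hj.2
                exact Or.inl (hT (Or.inr ⟨h3, h4⟩))
              · exact Or.inr hz
          have := hA _ hW
          rcases this with h | h
          · exact h
          · exact absurd hωZ₀ h
        · exact hC
      · exact hC
    have hC' : ω ∈ ⋂₀ {Z | ((X ∩ Y) ∩ (X ∩ Y)) ∪ (angel a Z Z ∩ demon a Z Z) ⊆ Z} := by
      intro T hT
      exact hC T (by
        apply Set.union_subset
        · exact fun t ht => hT (Or.inl ⟨ht, ht⟩)
        · exact fun t ht => hT (Or.inr ht))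
    exact ⟨Or.inr hC', Or.inr hC'⟩

/-- Soundness of the joint fixpoint rule FP2: if
`(X ∩ Y) ∪ (ς_α(R, R) ∩ δ_α(R, R)) ⊆ R` then
`ς_{α*}(X, Y) ∩ δ_{α*}(X, Y) ⊆ R`. -/
theorem joint_fixpoint_rule_sound (α : Game V) (X Y R : Set (V → ℝ))
    (h : (X ∩ Y) ∪ (angel α R R ∩ demon α R R) ⊆ R) :
    angel (.star α) X Y ∩ demon (.star α) X Y ⊆ R := by
  rintro ω ⟨(hA | hC), hB⟩
  · rcases hB with ⟨Z₀, hZ₀, hωZ₀⟩ | hC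
    · have hW : X ∪ angel α (R ∪ Z₀ᶜ) (R ∪ Z₀ᶜ)ᶜ ⊆ R ∪ Z₀ᶜ := by
        apply Set.union_subset
        · intro ω' hω'
          by_cases hz : ω' ∈ Z₀
          · exact Or.inl (h (Or.inl ⟨hω', (hZ₀ hz).1⟩))
          · exact Or.inr hz
        · intro ω' hω'
          by_cases hz : ω' ∈ Z₀
          · have hd : ω' ∈ demon α Z₀ᶜ Z₀ := (hZ₀ hz).2
            have h1 : ω' ∈ angel α (R ∪ Z₀ᶜ) Z₀ :=
              (gmono α _ _ _ _ (le_refl _)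
                (fun t ht => not_not.mp fun hz => ht (Or.inr hz) : (R ∪ Z₀ᶜ)ᶜ ⊆ Z₀)).1 hω'
            have h2 : ω' ∈ demon α (R ∪ Z₀ᶜ) Z₀ :=
              (gmono α _ _ _ _ (Set.subset_union_right) (le_refl _)).2 hd
            have hj := joint α (R ∪ Z₀ᶜ) Z₀ ⟨h1, h2⟩
            have hsub : (R ∪ Z₀ᶜ) ∩ Z₀ ⊆ R := by
              rintro t ⟨(ht | ht), hz'⟩
              · exact ht
              · exact absurd hz' ht
            have h3 : ω' ∈ angel α R R := (gmono α _ _ _ _ hsub hsub).1 hj.1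
            have h4 : ω' ∈ demon α R R := (gmono α _ _ _ _ hsub hsub).2 hj.2
            exact Or.inl (h (Or.inr ⟨h3, h4⟩))
          · exact Or.inr hz
      rcases hA _ hW with hr | hr
      · exact hr
      · exact absurd hωZ₀ hr
    · exact hC R h
  · exact hC R h
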